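/- Let (A, d_A) and (V, d_V) be pseudometric spaces, let T be a natural number, and let γ ∈ [0,1] and α ≥ 0 be real numbers. Given sequences a*, aC, aD : {0,…,T} → A and v*, vC, vD : {0,…,T} → V, define ε^{Dc}_t = d_A(a*_t, aC_t) + α·d_V(v*_t, vC_t) and ε^{D}_t = d_A(a*_t, aD_t) + α·d_V(v*_t, vD_t). If the surrogate contribution degree Δε̂ = Σ_{t=0}^{T} γ^t (d_A(aC_t, aD_t) + α·d_V(vC_t, vD_t)) equals 0, then the contribution degree Δε = Σ_{t=0}^{T} γ^t (ε^{Dc}_t − ε^{D}_t) satisfies Δε ≤ 0. -/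
import Mathlib

/-- If the surrogate contribution degree vanishes, then the contribution degree
of the left-out features is nonpositive. -/
theorem contribution_degree_nonpos_of_surrogate_eq_zero
    {A V : Type*} [PseudoMetricSpace A] [PseudoMetricSpace V]
    (T : ℕ) (γ α : ℝ) (hγ0 : 0 ≤ γ) (hγ1 : γ ≤ 1) (hα : 0 ≤ α)
    (astar aC aD : ℕ → A) (vstar vC vD : ℕ → V)
    (hzero : ∑ t ∈ Finset.range (T + 1), γ ^ t *
        (dist (aC t) (aD t) + α * dist (vC t) (vD t)) = 0) :
    ∑ t ∈ Finset.range (T + 1), γ ^ t *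
        ((dist (astar t) (aC t) + α * dist (vstar t) (vC t)) -
         (dist (astar t) (aD t) + α * dist (vstar t) (vD t))) ≤ 0 := by
  calc ∑ t ∈ Finset.range (T + 1), γ ^ t *
        ((dist (astar t) (aC t) + α * dist (vstar t) (vC t)) -
         (dist (astar t) (aD t) + α * dist (vstar t) (vD t)))
      ≤ ∑ t ∈ Finset.range (T + 1), γ ^ t *
        (dist (aC t) (aD t) + α * dist (vC t) (vD t)) := by
        apply Finset.sum_le_sum
        intro t _
        apply mul_le_mul_of_nonneg_left _ (pow_nonneg hγ0 t)
        have h1 : dist (astar t) (aC t) - dist (astar t) (aD t) ≤ dist (aC t) (aD t) := by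
          have := dist_triangle (astar t) (aD t) (aC t)
          rw [dist_comm (aD t) (aC t)] at this
          linarith
        have h2 : dist (vstar t) (vC t) - dist (vstar t) (vD t) ≤ dist (vC t) (vD t) := by
          have := dist_triangle (vstar t) (vD t) (vC t)
          rw [dist_comm (vD t) (vC t)] at this
          linarith
        nlinarith [mul_le_mul_of_nonneg_left h2 hα]
    _ = 0 := hzero
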